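/- For every real number α, if liminf_{q→∞} q·‖qα‖ ≠ 1/√5, then liminf_{q→∞} q·‖qα‖ ≤ 1/(2√2). -/

import Mathlib

/-
For irrational `α` with convergents `p_n / q_n`, let `r_n = q_{n-1} ‖q_{n-1} α‖` and
`t_n = q_{n-1} / q_n`. By the best approximation property of convergents, the liminf of `q ‖q α‖`
over all `q` equals the liminf `L` of `r_n`. The identity `q_n ‖q_{n-1} α‖ + q_{n-1} ‖q_n α‖ = 1`
reads `r_n = t_n (1 - t_n r_{n+1})`. If eventually `r_n > 1/(2√2)`, this forces `t_n > √2 - 1`,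
so all but finitely many partial quotients equal `1` and `t_n → φ⁻¹`. Then liminf and limsup turn
the identity into `L = φ⁻¹ - φ⁻² M` and `M = φ⁻¹ - φ⁻² L` with `M = limsup r_n`, whence
`L = M = 1/√5`. For rational `α` the liminf is `0`.
-/

/-- Distance from a real number to the nearest integer. -/
noncomputable def distNearestInt (t : ℝ) : ℝ := ⨅ n : ℤ, |t - n|

open Filter Topology

open scoped goldenRatio

lemma tendsto_of_eventually_dist_succ_le {X : Type*} [PseudoMetricSpace X] {u : ℕ → X} {x : X}
    {k : ℝ} (hk0 : 0 ≤ k) (hk1 : k < 1)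
    (h : ∀ᶠ n in atTop, dist (u (n + 1)) x ≤ k * dist (u n) x) : Tendsto u atTop (𝓝 x) := by
  obtain ⟨N, hN⟩ := eventually_atTop.1 h
  have hpow : ∀ m, dist (u (m + N)) x ≤ k ^ m * dist (u N) x := by
    intro m
    induction m with
    | zero => simp
    | succ m ih =>
      calc dist (u (m + 1 + N)) x ≤ k * dist (u (m + N)) x := by
            rw [add_right_comm]; exact hN _ (by omega)
        _ ≤ k * (k ^ m * dist (u N) x) := by gcongr
        _ = k ^ (m + 1) * dist (u N) x := by ring
  rw [← tendsto_add_atTop_iff_nat N]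
  refine tendsto_iff_dist_tendsto_zero.2 (squeeze_zero (fun _ => dist_nonneg) hpow ?_)
  simpa using (tendsto_pow_atTop_nhds_zero_of_lt_one hk0 hk1).mul_const (dist (u N) x)

section LiminfLimsup

variable {ι : Type*} {f : Filter ι} [f.NeBot] {u v : ι → ℝ}

lemma liminf_eq_of_tendsto_sub (h : Tendsto (u - v) f (𝓝 0))
    (hv₁ : IsBoundedUnder (· ≤ ·) f v) (hv₂ : IsBoundedUnder (· ≥ ·) f v) :
    liminf u f = liminf v f := by
  apply le_antisymm
  · simpa [h.limsup_eq] using liminf_add_le h.isBoundedUnder_ge h.isBoundedUnder_le hv₂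
      hv₁.isCoboundedUnder_ge
  · simpa [h.liminf_eq] using le_liminf_add hv₂ hv₁ h.isBoundedUnder_ge
      h.isBoundedUnder_le.isCoboundedUnder_ge

lemma limsup_eq_of_tendsto_sub (h : Tendsto (u - v) f (𝓝 0))
    (hv₁ : IsBoundedUnder (· ≤ ·) f v) (hv₂ : IsBoundedUnder (· ≥ ·) f v) :
    limsup u f = limsup v f := by
  apply le_antisymm
  · simpa [h.limsup_eq] using limsup_add_le h.isBoundedUnder_ge h.isBoundedUnder_le
      hv₂.isCoboundedUnder_le hv₁
  · simpa [h.liminf_eq] using le_limsup_add hv₁ hv₂.isCoboundedUnder_le h.isBoundedUnder_le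
      h.isBoundedUnder_ge

lemma antitone_const_sub_mul {a b : ℝ} (hb : 0 ≤ b) : Antitone fun x : ℝ => a - b * x :=
  fun _ _ hxy => sub_le_sub_left (mul_le_mul_of_nonneg_left hxy hb) a

lemma liminf_const_sub_mul {a b : ℝ} (hb : 0 ≤ b)
    (hu₁ : IsBoundedUnder (· ≤ ·) f u) (hu₂ : IsBoundedUnder (· ≥ ·) f u) :
    liminf (fun i => a - b * u i) f = a - b * limsup u f :=
  ((antitone_const_sub_mul hb).map_limsup_of_continuousAt u (by fun_prop) hu₁
    hu₂.isCoboundedUnder_le).symm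

lemma limsup_const_sub_mul {a b : ℝ} (hb : 0 ≤ b)
    (hu₁ : IsBoundedUnder (· ≤ ·) f u) (hu₂ : IsBoundedUnder (· ≥ ·) f u) :
    limsup (fun i => a - b * u i) f = a - b * liminf u f :=
  ((antitone_const_sub_mul hb).map_liminf_of_continuousAt u (by fun_prop)
    hu₁.isCoboundedUnder_ge hu₂).symm

end LiminfLimsup

lemma ne_zero_and_mul_nonpos_of_lt {a b q x y : ℤ} (ha : 1 ≤ a) (hab : a ≤ b)
    (hq : q = x * a + y * b) (hq1 : 1 ≤ q) (hqb : q < b) : x ≠ 0 ∧ x * y ≤ 0 := by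
  constructor
  · rintro rfl
    rcases le_or_gt y 0 with hy | hy <;> nlinarith
  · by_contra! hxy
    rcases pos_and_pos_or_neg_and_neg_of_mul_pos hxy with ⟨hx, hy⟩ | ⟨hx, hy⟩ <;> nlinarith

lemma le_abs_mul_sub_mul {x y : ℤ} {A B : ℝ} (hA : 0 ≤ A) (hB : 0 ≤ B) (hx : x ≠ 0)
    (hxy : x * y ≤ 0) : A ≤ |x * A - y * B| := by
  rcases hx.lt_or_gt with hx | hx
  · have hx' : (x : ℝ) ≤ -1 := by exact_mod_cast Int.le_sub_one_of_lt hx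
    have hy : (0 : ℝ) ≤ y := by exact_mod_cast nonneg_of_mul_nonpos_right hxy hx
    refine le_trans ?_ (neg_le_abs _)
    nlinarith
  · have hx' : (1 : ℝ) ≤ x := by exact_mod_cast hx
    have hy : (y : ℝ) ≤ 0 := by exact_mod_cast nonpos_of_mul_nonpos_right hxy hx
    refine le_trans ?_ (le_abs_self _)
    nlinarith

lemma inv_goldenRatio_mul_one_add : φ⁻¹ * (1 + φ⁻¹) = 1 := by
  rw [Real.inv_goldenRatio]
  linear_combination Real.goldenConj_sq

lemma dist_inv_one_add_inv_goldenRatio_le {t : ℝ} (ht : 0 ≤ t) :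
    dist (1 + t)⁻¹ φ⁻¹ ≤ φ⁻¹ * dist t φ⁻¹ := by
  have hg := inv_goldenRatio_mul_one_add
  have hg0 : 0 < φ⁻¹ := inv_pos.2 Real.goldenRatio_pos
  have ht1 : 0 < 1 + t := by linarith
  have key : (1 + t)⁻¹ - φ⁻¹ = φ⁻¹ * (φ⁻¹ - t) / (1 + t) := by
    rw [eq_div_iff ht1.ne', sub_mul, inv_mul_cancel₀ ht1.ne']
    linear_combination -hg
  rw [Real.dist_eq, Real.dist_eq, key, abs_div, abs_mul, abs_of_pos hg0, abs_of_pos ht1,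
    abs_sub_comm]
  exact div_le_self (by positivity) (by linarith)

lemma tendsto_inv_goldenRatio_of_eventually {u : ℕ → ℝ} (h0 : ∀ n, 0 ≤ u n)
    (h : ∀ᶠ n in atTop, u (n + 1) = (1 + u n)⁻¹) : Tendsto u atTop (𝓝 φ⁻¹) :=
  tendsto_of_eventually_dist_succ_le (inv_nonneg.2 Real.goldenRatio_pos.le)
    (inv_lt_one_of_one_lt₀ Real.one_lt_goldenRatio)
    (h.mono fun n hn => hn ▸ dist_inv_one_add_inv_goldenRatio_le (h0 n))

lemma sqrt_two_sub_one_lt_of_lt_mul {t r : ℝ} (hr : 1 / (2 * √2) < r)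
    (h : 1 / (2 * √2) < t * (1 - t * r)) : √2 - 1 < t := by
  have h2 : √2 ^ 2 = 2 := Real.sq_sqrt (by norm_num)
  have h2pos : 0 < √2 := by positivity
  have hk : 1 / (2 * √2) * (1 + t ^ 2) < t := by
    nlinarith [mul_le_mul_of_nonneg_left hr.le (sq_nonneg t)]
  have hk' : 1 + t ^ 2 < 2 * √2 * t := by
    rw [div_mul_eq_mul_div, div_lt_iff₀ (by positivity), one_mul] at hk
    linarith
  nlinarith

lemma inv_add_lt_sqrt_two_sub_one {a t : ℝ} (ha : 2 ≤ a) (ht : √2 - 1 < t) :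
    (a + t)⁻¹ < √2 - 1 := by
  have h2 : √2 ^ 2 = 2 := Real.sq_sqrt (by norm_num)
  have h2gt : 1 < √2 := by nlinarith [Real.sqrt_nonneg 2]
  rw [inv_lt_iff_one_lt_mul₀' (by linarith)]
  nlinarith

lemma eq_one_div_sqrt_five_of_eq_sub {L M : ℝ} (hL : L = φ⁻¹ - φ⁻¹ ^ 2 * M)
    (hM : M = φ⁻¹ - φ⁻¹ ^ 2 * L) : L = 1 / √5 := by
  have hg : φ⁻¹ = (√5 - 1) / 2 := by rw [Real.inv_goldenRatio, Real.goldenConj]; ring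
  have h5 : √5 ^ 2 = 5 := Real.sq_sqrt (by norm_num)
  have h5gt : 2 < √5 := by nlinarith [Real.sqrt_nonneg 5]
  rw [hg] at hL hM
  have hLM : L = M := by nlinarith
  subst hLM
  rw [eq_div_iff (by positivity)]
  nlinarith

lemma distNearestInt_eq_abs_sub_round (t : ℝ) : distNearestInt t = |t - round t| :=
  le_antisymm (ciInf_le ⟨0, by rintro _ ⟨n, rfl⟩; exact abs_nonneg _⟩ (round t))
    (le_ciInf (round_le t))

lemma distNearestInt_nonneg (t : ℝ) : 0 ≤ distNearestInt t := by
  rw [distNearestInt_eq_abs_sub_round]; exact abs_nonneg _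

lemma distNearestInt_le (t : ℝ) (n : ℤ) : distNearestInt t ≤ |t - n| := by
  rw [distNearestInt_eq_abs_sub_round]; exact round_le t n

lemma distNearestInt_intCast (n : ℤ) : distNearestInt n = 0 :=
  le_antisymm (by simpa using distNearestInt_le n n) (distNearestInt_nonneg _)

noncomputable def scaledDist (α : ℝ) (q : ℕ) : ℝ := q * distNearestInt (q * α)

lemma scaledDist_nonneg (α : ℝ) (q : ℕ) : 0 ≤ scaledDist α q :=
  mul_nonneg q.cast_nonneg (distNearestInt_nonneg _)

lemma liminf_scaledDist_ratCast_le_zero (x : ℚ) : liminf (scaledDist x) atTop ≤ 0 := by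
  refine liminf_le_of_frequently_le ?_ (isBoundedUnder_of ⟨0, scaledDist_nonneg x⟩)
  refine (tendsto_id.atTop_mul_const' x.pos).frequently (Frequently.of_forall fun k => ?_)
  have hint : ((k * x.den : ℕ) : ℝ) * x = ((k * x.num : ℤ) : ℝ) := by
    have h : (x : ℝ) * x.den = x.num := by exact_mod_cast Rat.mul_den_eq_num x
    push_cast
    linear_combination (k : ℝ) * h
  rw [id, scaledDist, hint, distNearestInt_intCast, mul_zero]

namespace CFExpansion

variable (α : ℝ)

/- `den α n` and `num α n` are `q_{n-1}` and `p_{n-1}`, starting from `(q_{-1}, p_{-1}) = (0, 1)`;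
`pquot α n` is the partial quotient `a_{n+1}` and `rem α n = 1 / α_{n+1}` for the complete
quotients `α_k`. -/
noncomputable def rem : ℕ → ℝ
  | 0 => Int.fract α
  | n + 1 => Int.fract (rem n)⁻¹

noncomputable def pquot (n : ℕ) : ℤ := ⌊(rem α n)⁻¹⌋

noncomputable def den : ℕ → ℤ
  | 0 => 0
  | 1 => 1
  | n + 2 => pquot α n * den (n + 1) + den n

noncomputable def num : ℕ → ℤ
  | 0 => 1
  | 1 => ⌊α⌋
  | n + 2 => pquot α n * num (n + 1) + num n

noncomputable def err (n : ℕ) : ℝ := ∏ i ∈ Finset.range n, rem α i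

noncomputable def scaledErr (n : ℕ) : ℝ := den α n * err α n

noncomputable def denRatio (n : ℕ) : ℝ := den α n / den α (n + 1)

variable {α}

lemma irrational_rem (hα : Irrational α) : ∀ n, Irrational (rem α n)
  | 0 => hα.sub_intCast ⌊α⌋
  | n + 1 => (irrational_rem hα n).inv.sub_intCast _

lemma rem_pos (hα : Irrational α) (n : ℕ) : 0 < rem α n := by
  have hnn : 0 ≤ rem α n := by cases n <;> exact Int.fract_nonneg _
  exact hnn.lt_of_ne' (irrational_rem hα n).ne_zero

lemma rem_lt_one (n : ℕ) : rem α n < 1 := by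
  cases n <;> exact Int.fract_lt_one _

lemma one_le_pquot (hα : Irrational α) (n : ℕ) : 1 ≤ pquot α n := by
  rw [pquot, Int.le_floor, Int.cast_one]
  exact (one_lt_inv₀ (rem_pos hα n)).2 (rem_lt_one n) |>.le

lemma rem_mul_rem_succ (hα : Irrational α) (n : ℕ) :
    rem α n * rem α (n + 1) = 1 - pquot α n * rem α n := by
  rw [rem, Int.fract, ← pquot, mul_sub, mul_inv_cancel₀ (rem_pos hα n).ne']
  ring

lemma err_succ (n : ℕ) : err α (n + 1) = err α n * rem α n := Finset.prod_range_succ _ _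

lemma err_pos (hα : Irrational α) (n : ℕ) : 0 < err α n :=
  Finset.prod_pos fun i _ => rem_pos hα i

lemma err_add_two (hα : Irrational α) (n : ℕ) :
    err α (n + 2) = err α n - pquot α n * err α (n + 1) := by
  rw [err_succ, err_succ, mul_assoc, rem_mul_rem_succ hα]
  ring

lemma den_nonneg (hα : Irrational α) : ∀ n, 0 ≤ den α n
  | 0 => le_rfl
  | 1 => zero_le_one
  | n + 2 => add_nonneg (mul_nonneg (by linarith [one_le_pquot hα n]) (den_nonneg hα (n + 1)))
      (den_nonneg hα n)

lemma den_succ_pos (hα : Irrational α) : ∀ n, 0 < den α (n + 1)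
  | 0 => Int.one_pos
  | n + 1 => add_pos_of_pos_of_nonneg (mul_pos (by linarith [one_le_pquot hα n])
      (den_succ_pos hα n)) (den_nonneg hα n)

lemma den_le_den_succ (hα : Irrational α) : ∀ n, den α n ≤ den α (n + 1)
  | 0 => zero_le_one
  | n + 1 => by
    change _ ≤ pquot α n * den α (n + 1) + den α n
    nlinarith [one_le_pquot hα n, den_succ_pos hα n, den_nonneg hα n]

lemma den_mono (hα : Irrational α) : Monotone (den α) :=
  monotone_nat_of_le_succ (den_le_den_succ hα)

lemma den_lt_den_succ (hα : Irrational α) (n : ℕ) : den α (n + 2) < den α (n + 3) := by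
  change _ < pquot α (n + 1) * den α (n + 2) + den α (n + 1)
  nlinarith [one_le_pquot hα (n + 1), den_succ_pos hα n, den_succ_pos hα (n + 1)]

lemma le_den_succ (hα : Irrational α) : ∀ n : ℕ, (n : ℤ) ≤ den α (n + 1)
  | 0 => zero_le_one
  | 1 => by
    change 1 ≤ pquot α 0 * 1 + 0
    linarith [one_le_pquot hα 0]
  | n + 2 => by
    have h : ((n + 1 : ℕ) : ℤ) ≤ den α (n + 2) := le_den_succ hα (n + 1)
    have : den α (n + 2) < den α (n + 3) := den_lt_den_succ hα n
    change ((n + 2 : ℕ) : ℤ) ≤ den α (n + 3)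
    push_cast at h ⊢
    omega

lemma tendsto_den (hα : Irrational α) : Tendsto (den α) atTop atTop :=
  (tendsto_add_atTop_iff_nat 1).1 <|
    tendsto_atTop_mono (le_den_succ hα) tendsto_natCast_atTop_atTop

lemma den_mul_sub_num (hα : Irrational α) :
    ∀ n, (den α n : ℝ) * α - num α n = (-1) ^ (n + 1) * err α n
  | 0 => by simp [den, num, err]
  | 1 => by simp [den, num, err, rem, Int.self_sub_floor]
  | n + 2 => by
    have h0 := den_mul_sub_num hα n
    have h1 := den_mul_sub_num hα (n + 1)
    simp only [den, num, err_add_two hα, Int.cast_add, Int.cast_mul, pow_succ] at *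
    linear_combination (pquot α n : ℝ) * h1 + h0

lemma den_mul_num_sub (n : ℕ) :
    den α (n + 1) * num α n - num α (n + 1) * den α n = (-1) ^ n := by
  induction n with
  | zero => simp [den, num]
  | succ n ih =>
    simp only [den, num, pow_succ]
    linear_combination -ih

lemma den_mul_err_add (hα : Irrational α) (n : ℕ) :
    (den α (n + 1) : ℝ) * err α n + den α n * err α (n + 1) = 1 := by
  induction n with
  | zero => simp [den, err]
  | succ n ih =>
    simp only [den, err_add_two hα, Int.cast_add, Int.cast_mul]
    linear_combination ih

lemma exists_int_comb_den_num (n : ℕ) (q p : ℤ) : ∃ x y : ℤ,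
    q = x * den α (n + 1) + y * den α (n + 2) ∧ p = x * num α (n + 1) + y * num α (n + 2) := by
  have hdet := den_mul_num_sub (α := α) (n + 1)
  set s : ℤ := (-1) ^ (n + 1)
  have hs : s * s = 1 := by rw [← pow_add, ← two_mul, pow_mul]; norm_num
  refine ⟨s * (den α (n + 2) * p - num α (n + 2) * q), s * (num α (n + 1) * q - den α (n + 1) * p),
    ?_, ?_⟩
  · linear_combination (-s * q) * hdet - q * hs
  · linear_combination (-s * p) * hdet - p * hs

lemma err_le_abs_sub (hα : Irrational α) (n : ℕ) {q : ℤ} (p : ℤ) (hq1 : 1 ≤ q)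
    (hq2 : q < den α (n + 2)) : err α (n + 1) ≤ |q * α - p| := by
  obtain ⟨x, y, rfl, rfl⟩ := exists_int_comb_den_num (α := α) n q p
  obtain ⟨hx, hxy⟩ := ne_zero_and_mul_nonpos_of_lt (den_succ_pos hα n) (den_le_den_succ hα _) rfl
    hq1 hq2
  have h1 := den_mul_sub_num hα (n + 1)
  have h2 := den_mul_sub_num hα (n + 2)
  have key : ((x * den α (n + 1) + y * den α (n + 2) : ℤ) : ℝ) * α
      - (x * num α (n + 1) + y * num α (n + 2) : ℤ)
      = (-1) ^ n * (x * err α (n + 1) - y * err α (n + 2)) := by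
    push_cast
    simp only [pow_succ] at h1 h2
    linear_combination (x : ℝ) * h1 + (y : ℝ) * h2
  rw [key, abs_mul, abs_neg_one_pow, one_mul]
  exact le_abs_mul_sub_mul (err_pos hα _).le (err_pos hα _).le hx hxy

lemma distNearestInt_den_mul (hα : Irrational α) (n : ℕ) :
    distNearestInt (den α (n + 2) * α) = err α (n + 2) := by
  apply le_antisymm
  · have h := distNearestInt_le (den α (n + 2) * α) (num α (n + 2))
    rwa [den_mul_sub_num hα, abs_mul, abs_neg_one_pow, one_mul, abs_of_pos (err_pos hα _)] at h
  · rw [distNearestInt_eq_abs_sub_round]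
    exact err_le_abs_sub hα (n + 1) _ (den_succ_pos hα (n + 1)) (den_lt_den_succ hα n)

lemma cast_den_succ_pos (hα : Irrational α) (n : ℕ) : (0 : ℝ) < den α (n + 1) := by
  exact_mod_cast den_succ_pos hα n

lemma scaledErr_nonneg (hα : Irrational α) (n : ℕ) : 0 ≤ scaledErr α n :=
  mul_nonneg (by exact_mod_cast den_nonneg hα n) (err_pos hα n).le

lemma scaledErr_le_one (hα : Irrational α) (n : ℕ) : scaledErr α n ≤ 1 := by
  have hden : (den α n : ℝ) ≤ den α (n + 1) := by exact_mod_cast den_le_den_succ hα n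
  have hden0 : (0 : ℝ) ≤ den α n := by exact_mod_cast den_nonneg hα n
  have := den_mul_err_add hα n
  have := err_pos hα n
  have := err_pos hα (n + 1)
  rw [scaledErr]
  nlinarith

lemma denRatio_nonneg (hα : Irrational α) (n : ℕ) : 0 ≤ denRatio α n :=
  div_nonneg (by exact_mod_cast den_nonneg hα n) (cast_den_succ_pos hα n).le

lemma denRatio_le_one (hα : Irrational α) (n : ℕ) : denRatio α n ≤ 1 :=
  div_le_one_of_le₀ (by exact_mod_cast den_le_den_succ hα n) (cast_den_succ_pos hα n).le

lemma scaledErr_eq (hα : Irrational α) (n : ℕ) :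
    scaledErr α n = denRatio α n * (1 - denRatio α n * scaledErr α (n + 1)) := by
  have h := den_mul_err_add hα n
  have hden := (cast_den_succ_pos hα n).ne'
  rw [scaledErr, scaledErr, denRatio]
  field_simp
  linear_combination (den α n : ℝ) * h

lemma denRatio_succ (hα : Irrational α) (n : ℕ) :
    denRatio α (n + 1) = (pquot α n + denRatio α n)⁻¹ := by
  have h1 := (cast_den_succ_pos hα n).ne'
  have h2 := (cast_den_succ_pos hα (n + 1)).ne'
  rw [denRatio, denRatio, show den α (n + 2) = pquot α n * den α (n + 1) + den α n from rfl]
  field_simp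
  push_cast
  ring

lemma scaledDist_den (hα : Irrational α) (n : ℕ) :
    scaledDist α (den α (n + 2)).toNat = scaledErr α (n + 2) := by
  have h : (((den α (n + 2)).toNat : ℕ) : ℝ) = den α (n + 2) := by
    exact_mod_cast Int.toNat_of_nonneg (den_nonneg hα _)
  rw [scaledDist, h, distNearestInt_den_mul hα, scaledErr]

lemma tendsto_den_toNat (hα : Irrational α) : Tendsto (fun n => (den α n).toNat) atTop atTop :=
  tendsto_atTop.2 fun b => (tendsto_atTop.1 (tendsto_den hα) b).mono fun n hn => by omega

lemma scaledDist_den_eventuallyEq (hα : Irrational α) :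
    (fun n => scaledDist α (den α n).toNat) =ᶠ[atTop] scaledErr α :=
  eventually_atTop.2 ⟨2, fun n hn => by
    obtain ⟨m, rfl⟩ := Nat.exists_eq_add_of_le' hn
    exact scaledDist_den hα m⟩

lemma frequently_scaledDist_den_le_one (hα : Irrational α) :
    ∃ᶠ n in atTop, scaledDist α (den α n).toNat ≤ 1 :=
  ((scaledDist_den_eventuallyEq hα).mono fun n hn => hn.trans_le (scaledErr_le_one hα n)).frequently

lemma liminf_scaledDist_le (hα : Irrational α) :
    liminf (scaledDist α) atTop ≤ liminf (scaledErr α) atTop := by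
  rw [← liminf_congr (scaledDist_den_eventuallyEq hα)]
  exact (tendsto_den_toNat hα).liminf_le_liminf_comp
    (IsCoboundedUnder.of_frequently_le (frequently_map.2 (frequently_scaledDist_den_le_one hα)))
    (isBoundedUnder_of ⟨0, scaledDist_nonneg α⟩)

lemma exists_den_le_lt (hα : Irrational α) {q : ℕ} (hq : 1 ≤ q) :
    ∃ n, den α (n + 1) ≤ q ∧ (q : ℤ) < den α (n + 2) := by
  have hex : ∃ m, (q : ℤ) < den α (m + 1) := by
    refine ⟨q + 1, ?_⟩
    have := le_den_succ hα (q + 1)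
    push_cast at this
    omega
  obtain ⟨n, hn⟩ : ∃ n, Nat.find hex = n + 1 := by
    refine Nat.exists_eq_add_one_of_ne_zero fun h0 => ?_
    have := h0 ▸ Nat.find_spec hex
    change (q : ℤ) < 1 at this
    omega
  refine ⟨n, not_lt.1 (Nat.find_min hex (by omega)), ?_⟩
  simpa [hn] using Nat.find_spec hex

lemma scaledErr_le_scaledDist (hα : Irrational α) {n q : ℕ} (h1 : den α (n + 1) ≤ q)
    (h2 : (q : ℤ) < den α (n + 2)) : scaledErr α (n + 1) ≤ scaledDist α q := by
  have hq1 : 1 ≤ (q : ℤ) := (den_succ_pos hα n).trans_le h1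
  have hd : err α (n + 1) ≤ distNearestInt (q * α) := by
    rw [distNearestInt_eq_abs_sub_round]
    exact_mod_cast err_le_abs_sub hα n (round (q * α)) hq1 h2
  exact mul_le_mul (by exact_mod_cast h1) hd (err_pos hα _).le q.cast_nonneg

lemma eventually_lt_scaledDist (hα : Irrational α) {c : ℝ}
    (h : ∀ᶠ n in atTop, c < scaledErr α n) : ∀ᶠ q in atTop, c < scaledDist α q := by
  obtain ⟨N, hN⟩ := eventually_atTop.1 h
  filter_upwards [eventually_ge_atTop (den α N).toNat, eventually_ge_atTop 1] with q hqN hq1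
  obtain ⟨n, h1, h2⟩ := exists_den_le_lt hα hq1
  have hNn : N ≤ n + 1 := by
    by_contra! hlt
    have := den_mono hα (show n + 2 ≤ N by omega)
    omega
  exact (hN _ hNn).trans_le (scaledErr_le_scaledDist hα h1 h2)

lemma le_liminf_scaledDist (hα : Irrational α) :
    liminf (scaledErr α) atTop ≤ liminf (scaledDist α) atTop := by
  refine le_of_forall_lt fun c hc => ?_
  obtain ⟨b, hcb, hb⟩ := exists_between hc
  have hb' := eventually_lt_of_lt_liminf hb (isBoundedUnder_of ⟨0, scaledErr_nonneg hα⟩)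
  have hcobdd : IsCoboundedUnder (· ≥ ·) atTop (scaledDist α) :=
    .of_frequently_le ((tendsto_den_toNat hα).frequently (frequently_scaledDist_den_le_one hα))
  exact hcb.trans_le
    (le_liminf_of_le hcobdd ((eventually_lt_scaledDist hα hb').mono fun _ => le_of_lt))

lemma liminf_scaledDist_eq (hα : Irrational α) :
    liminf (scaledDist α) atTop = liminf (scaledErr α) atTop :=
  (liminf_scaledDist_le hα).antisymm (le_liminf_scaledDist hα)

lemma eventually_sqrt_two_sub_one_lt_denRatio (hα : Irrational α)
    (h : 1 / (2 * √2) < liminf (scaledErr α) atTop) : ∀ᶠ n in atTop, √2 - 1 < denRatio α n := by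
  have hev := eventually_lt_of_lt_liminf h (isBoundedUnder_of ⟨0, scaledErr_nonneg hα⟩)
  filter_upwards [hev, (tendsto_add_atTop_nat 1).eventually hev] with n h0 h1
  rw [scaledErr_eq hα n] at h0
  exact sqrt_two_sub_one_lt_of_lt_mul h1 h0

lemma eventually_pquot_eq_one (hα : Irrational α)
    (h : 1 / (2 * √2) < liminf (scaledErr α) atTop) : ∀ᶠ n in atTop, pquot α n = 1 := by
  have hev := eventually_sqrt_two_sub_one_lt_denRatio hα h
  filter_upwards [hev, (tendsto_add_atTop_nat 1).eventually hev] with n h0 h1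
  refine (one_le_pquot hα n).antisymm' (not_lt.1 fun h2 => h1.not_ge ?_)
  rw [denRatio_succ hα]
  exact (inv_add_lt_sqrt_two_sub_one (by exact_mod_cast h2) h0).le

lemma tendsto_denRatio (hα : Irrational α) (h : 1 / (2 * √2) < liminf (scaledErr α) atTop) :
    Tendsto (denRatio α) atTop (𝓝 φ⁻¹) :=
  tendsto_inv_goldenRatio_of_eventually (denRatio_nonneg hα) <|
    (eventually_pquot_eq_one hα h).mono fun n hn => by rw [denRatio_succ hα, hn, Int.cast_one]

lemma tendsto_scaledErr_sub (hα : Irrational α) (h : 1 / (2 * √2) < liminf (scaledErr α) atTop) :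
    Tendsto (fun n => scaledErr α n - (φ⁻¹ - φ⁻¹ ^ 2 * scaledErr α (n + 1))) atTop (𝓝 0) := by
  have hg0 : 0 < φ⁻¹ := inv_pos.2 Real.goldenRatio_pos
  have hg1 : φ⁻¹ < 1 := inv_lt_one_of_one_lt₀ Real.one_lt_goldenRatio
  have hlim : Tendsto (fun n => 3 * |denRatio α n - φ⁻¹|) atTop (𝓝 0) := by
    simpa using ((tendsto_denRatio hα h).sub_const φ⁻¹).abs.const_mul 3
  refine squeeze_zero_norm (fun n => ?_) hlim
  set t := denRatio α n
  set r := scaledErr α (n + 1)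
  have ht0 : 0 ≤ t := denRatio_nonneg hα n
  have ht1 : t ≤ 1 := denRatio_le_one hα n
  have hr0 : 0 ≤ r := scaledErr_nonneg hα (n + 1)
  have hr1 : r ≤ 1 := scaledErr_le_one hα (n + 1)
  have hfac : |1 - (t + φ⁻¹) * r| ≤ 3 := by
    rw [abs_le]; constructor <;> nlinarith
  rw [scaledErr_eq hα n, Real.norm_eq_abs,
    show t * (1 - t * r) - (φ⁻¹ - φ⁻¹ ^ 2 * r) = (t - φ⁻¹) * (1 - (t + φ⁻¹) * r) by ring,
    abs_mul, mul_comm]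
  exact mul_le_mul_of_nonneg_right hfac (abs_nonneg _)

lemma liminf_scaledErr_eq_of_lt (hα : Irrational α)
    (h : 1 / (2 * √2) < liminf (scaledErr α) atTop) :
    liminf (scaledErr α) atTop = 1 / √5 := by
  have hb₁ : IsBoundedUnder (· ≤ ·) atTop fun n => scaledErr α (n + 1) :=
    isBoundedUnder_of ⟨1, fun n => scaledErr_le_one hα _⟩
  have hb₂ : IsBoundedUnder (· ≥ ·) atTop fun n => scaledErr α (n + 1) :=
    isBoundedUnder_of ⟨0, fun n => scaledErr_nonneg hα _⟩
  have hv₁ : IsBoundedUnder (· ≤ ·) atTop fun n => φ⁻¹ - φ⁻¹ ^ 2 * scaledErr α (n + 1) :=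
    isBoundedUnder_of ⟨φ⁻¹, fun n => by nlinarith [scaledErr_nonneg hα (n + 1)]⟩
  have hv₂ : IsBoundedUnder (· ≥ ·) atTop fun n => φ⁻¹ - φ⁻¹ ^ 2 * scaledErr α (n + 1) :=
    isBoundedUnder_of ⟨φ⁻¹ - φ⁻¹ ^ 2, fun n => by nlinarith [scaledErr_le_one hα (n + 1)]⟩
  have he := tendsto_scaledErr_sub hα h
  refine eq_one_div_sqrt_five_of_eq_sub (M := limsup (scaledErr α) atTop) ?_ ?_
  · rw [liminf_eq_of_tendsto_sub he hv₁ hv₂, liminf_const_sub_mul (sq_nonneg _) hb₁ hb₂,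
      limsup_nat_add]
  · rw [limsup_eq_of_tendsto_sub he hv₁ hv₂, limsup_const_sub_mul (sq_nonneg _) hb₁ hb₂,
      liminf_nat_add]

end CFExpansion

theorem hurwitz_second_constant (α : ℝ)
    (h : Filter.liminf (fun q : ℕ => (q : ℝ) * distNearestInt (q * α)) Filter.atTop
        ≠ 1 / Real.sqrt 5) :
    Filter.liminf (fun q : ℕ => (q : ℝ) * distNearestInt (q * α)) Filter.atTop
      ≤ 1 / (2 * Real.sqrt 2) := by
  change liminf (scaledDist α) atTop ≠ 1 / √5 at h
  change liminf (scaledDist α) atTop ≤ 1 / (2 * √2)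
  by_cases hα : Irrational α
  · rw [CFExpansion.liminf_scaledDist_eq hα] at h ⊢
    by_contra! hlt
    exact h (CFExpansion.liminf_scaledErr_eq_of_lt hα hlt)
  · obtain ⟨x, rfl⟩ := not_not.1 hα
    exact (liminf_scaledDist_ratCast_le_zero x).trans (by positivity)
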